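/- arXiv:1201.3869 — 2 statements merged into one kernel-verified Lean document; each statement's English description precedes it below -/
import Mathlib

section
/- Fix a finite ground set V of users, a fixed pair U = {u,v} ⊆ V with u ≠ v, and reals 0 ≤ s_u, s_v, t with max{s_u, s_v} ≤ t ≤ s_u + s_v. Define g : 2^V → ℝ by g(A) = s_u if A∩U = {u}, g(A) = s_v if A∩U = {v}, g(A) = t if U ⊆ A, and g(A) = 0 if A∩U = ∅. Then g is monotone and submodular. -/
/-- The per-RB pairwise utility set function is monotone and submodular. -/
theorem pair_utility_monotone_submodular
    (V : Type*) [DecidableEq V] [Fintype V] (u v : V) (huv : u ≠ v)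
    (su sv t : ℝ) (hsu : 0 ≤ su) (hsv : 0 ≤ sv)
    (hmax : max su sv ≤ t) (hsum : t ≤ su + sv)
    (g : Finset V → ℝ)
    (hgu : ∀ A : Finset V, u ∈ A → v ∉ A → g A = su)
    (hgv : ∀ A : Finset V, v ∈ A → u ∉ A → g A = sv)
    (hgt : ∀ A : Finset V, u ∈ A → v ∈ A → g A = t)
    (hg0 : ∀ A : Finset V, u ∉ A → v ∉ A → g A = 0) :
    (∀ A B : Finset V, A ⊆ B → g A ≤ g B) ∧
    (∀ A B : Finset V, A ⊆ B → ∀ q : V, q ∉ B →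
      g (B ∪ {q}) - g B ≤ g (A ∪ {q}) - g A) := by
  have hut : su ≤ t := le_trans (le_max_left _ _) hmax
  have hvt : sv ≤ t := le_trans (le_max_right _ _) hmax
  have hval : ∀ A : Finset V, g A =
      if u ∈ A then (if v ∈ A then t else su) else (if v ∈ A then sv else 0) := by
    intro A
    by_cases hu : u ∈ A <;> by_cases hv : v ∈ A <;>
      simp [hu, hv, hgu A, hgv A, hgt A, hg0 A]
  constructor
  · intro A B hAB
    have h1 : u ∈ A → u ∈ B := fun h => hAB h
    have h2 : v ∈ A → v ∈ B := fun h => hAB h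
    rw [hval, hval]
    split_ifs <;> simp_all <;> linarith
  · intro A B hAB q hq
    have h1 : u ∈ A → u ∈ B := fun h => hAB h
    have h2 : v ∈ A → v ∈ B := fun h => hAB h
    rw [hval, hval, hval, hval]
    simp only [Finset.mem_union, Finset.mem_singleton]
    by_cases huA : u ∈ A <;> by_cases hvA : v ∈ A <;>
      by_cases huB : u ∈ B <;> by_cases hvB : v ∈ B <;>
      by_cases hqu : u = q <;> by_cases hqv : v = q <;>
      simp_all <;> linarith
end

section
/- Let h_u, h_v ∈ C^n and α_u ≥ α_v ≥ 0. Then α_u·log(1 + h_u† h_u) + α_v·log(1 + h_v†(I + h_u h_u†)^{-1} h_v) ≥ α_v·log(1 + h_v† h_v) + α_u·log(1 + h_u†(I + h_v h_v†)^{-1} h_u), i.e., among the two SIC decoding orders it is (weakly) better to decode the higher-weight user last (cancel it first). -/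
/-!
By Sherman–Morrison, `1 + hᵤ†(I + h_v h_v†)⁻¹ hᵤ = D / (1 + h_v†h_v)` with
`D = (1 + hᵤ†hᵤ)(1 + h_v†h_v) - |h_v†hᵤ|²`, which is `det (I + hᵤhᵤ† + h_vh_v†)` and hence
symmetric in the two users. Both sides therefore share the term `log D`, and their difference is
`(αu - αv) (log (1 + hᵤ†hᵤ) + log (1 + h_v†h_v) - log D) ≥ 0`, since `|h_v†hᵤ|² ≥ 0`.
Cauchy–Schwarz keeps `D` positive.
-/

open Matrix

namespace Matrix

section Field

variable {K m : Type*} [Field K] [Fintype m] [DecidableEq m]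

theorem inv_one_add_vecMulVec {v w : m → K} (h : 1 + w ⬝ᵥ v ≠ 0) :
    (1 + vecMulVec v w)⁻¹ = 1 - (1 + w ⬝ᵥ v)⁻¹ • vecMulVec v w := by
  refine inv_eq_right_inv ?_
  calc (1 + vecMulVec v w) * (1 - (1 + w ⬝ᵥ v)⁻¹ • vecMulVec v w)
      = 1 + (1 - (1 + w ⬝ᵥ v)⁻¹ * (1 + w ⬝ᵥ v)) • vecMulVec v w := by
        rw [mul_sub, mul_one, Matrix.mul_smul, add_mul, one_mul, vecMulVec_mul_vecMulVec,
          vecMulVec_smul]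
        module
    _ = 1 := by rw [inv_mul_cancel₀ h, sub_self, zero_smul, add_zero]

theorem dotProduct_inv_one_add_vecMulVec_mulVec {v w : m → K} (h : 1 + w ⬝ᵥ v ≠ 0)
    (x y : m → K) :
    x ⬝ᵥ ((1 + vecMulVec v w)⁻¹ *ᵥ y) = x ⬝ᵥ y - (1 + w ⬝ᵥ v)⁻¹ * (x ⬝ᵥ v) * (w ⬝ᵥ y) := by
  rw [inv_one_add_vecMulVec h, sub_mulVec, one_mulVec, smul_mulVec, vecMulVec_mulVec,
    op_smul_eq_smul, dotProduct_sub, dotProduct_smul, dotProduct_smul, smul_eq_mul, smul_eq_mul]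
  ring

end Field

section RCLike

open RCLike

variable {𝕜 m : Type*} [RCLike 𝕜] [Fintype m]

theorem star_dotProduct_eq_inner (v u : m → 𝕜) :
    star v ⬝ᵥ u = inner 𝕜 (WithLp.toLp 2 v) (WithLp.toLp 2 u) :=
  dotProduct_comm _ _

theorem re_star_dotProduct_self_nonneg (v : m → 𝕜) : 0 ≤ re (star v ⬝ᵥ v) := by
  rw [star_dotProduct_eq_inner]
  exact inner_self_nonneg

theorem ofReal_re_star_dotProduct_self (v : m → 𝕜) :
    (re (star v ⬝ᵥ v) : 𝕜) = star v ⬝ᵥ v := by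
  rw [star_dotProduct_eq_inner]
  exact inner_self_ofReal_re _

theorem norm_star_dotProduct_comm (u v : m → 𝕜) : ‖star u ⬝ᵥ v‖ = ‖star v ⬝ᵥ u‖ := by
  rw [star_dotProduct, norm_star]

theorem norm_star_dotProduct_sq_le (u v : m → 𝕜) :
    ‖star v ⬝ᵥ u‖ ^ 2 ≤ re (star v ⬝ᵥ v) * re (star u ⬝ᵥ u) := by
  simp only [star_dotProduct_eq_inner]
  rw [sq]
  nth_rw 2 [norm_inner_symm]
  exact inner_mul_inner_self_le _ _

theorem one_add_re_star_dotProduct_inv_one_add_vecMulVec_mulVec [DecidableEq m]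
    (u v : m → 𝕜) :
    1 + re (star u ⬝ᵥ ((1 + vecMulVec v (star v))⁻¹ *ᵥ u)) =
      ((1 + re (star u ⬝ᵥ u)) * (1 + re (star v ⬝ᵥ v)) - ‖star v ⬝ᵥ u‖ ^ 2) /
        (1 + re (star v ⬝ᵥ v)) := by
  have hv : 0 < 1 + re (star v ⬝ᵥ v) := by linarith [re_star_dotProduct_self_nonneg v]
  have hne : 1 + star v ⬝ᵥ v ≠ 0 := by
    rw [← ofReal_re_star_dotProduct_self, ← ofReal_one, ← ofReal_add, ofReal_ne_zero]
    exact hv.ne'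
  have hconj : star u ⬝ᵥ v * (star v ⬝ᵥ u) = ((‖star v ⬝ᵥ u‖ ^ 2 : ℝ) : 𝕜) := by
    rw [star_dotProduct u v, star_def, RCLike.conj_mul, ofReal_pow]
  have hreal : star u ⬝ᵥ u - (1 + star v ⬝ᵥ v)⁻¹ * (star u ⬝ᵥ v) * (star v ⬝ᵥ u) =
      ((re (star u ⬝ᵥ u) - (1 + re (star v ⬝ᵥ v))⁻¹ * ‖star v ⬝ᵥ u‖ ^ 2 : ℝ) : 𝕜) := by
    rw [mul_assoc, hconj, ← ofReal_re_star_dotProduct_self u, ← ofReal_re_star_dotProduct_self v]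
    push_cast
    ring
  rw [dotProduct_inv_one_add_vecMulVec_mulVec hne, hreal, ofReal_re]
  field_simp
  ring

end RCLike

end Matrix

open Real in
theorem mul_log_add_mul_log_div_le {a b d αu αv : ℝ} (ha : 0 < a) (hb : 0 < b) (hd : 0 < d)
    (hdab : d ≤ a * b) (hα : αv ≤ αu) :
    αv * log b + αu * log (d / b) ≤ αu * log a + αv * log (d / a) := by
  have hlog : log d ≤ log a + log b := by
    rw [← log_mul ha.ne' hb.ne']
    exact log_le_log hd hdab
  rw [log_div hd.ne' hb.ne', log_div hd.ne' ha.ne']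
  nlinarith [mul_le_mul_of_nonneg_left hlog (sub_nonneg.2 hα)]

theorem sic_order_comparison_general (n : ℕ) (hu hv : Fin n → ℂ) (αu αv : ℝ)
    (hαuv : αv ≤ αu) :
    αv * Real.log (1 + (star hv ⬝ᵥ hv).re) +
      αu * Real.log (1 + (star hu ⬝ᵥ
        (((1 : Matrix (Fin n) (Fin n) ℂ) + Matrix.vecMulVec hv (star hv))⁻¹ *ᵥ hu)).re)
    ≤ αu * Real.log (1 + (star hu ⬝ᵥ hu).re) +
      αv * Real.log (1 + (star hv ⬝ᵥ
        (((1 : Matrix (Fin n) (Fin n) ℂ) + Matrix.vecMulVec hu (star hu))⁻¹ *ᵥ hv)).re) := by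
  simp only [← RCLike.re_to_complex]
  rw [one_add_re_star_dotProduct_inv_one_add_vecMulVec_mulVec,
    one_add_re_star_dotProduct_inv_one_add_vecMulVec_mulVec, norm_star_dotProduct_comm hu hv,
    mul_comm (1 + RCLike.re (star hv ⬝ᵥ hv))]
  have hsu := re_star_dotProduct_self_nonneg hu
  have hsv := re_star_dotProduct_self_nonneg hv
  have hcs := norm_star_dotProduct_sq_le hu hv
  exact mul_log_add_mul_log_div_le (by linarith) (by linarith) (by linarith)
    (by linarith [sq_nonneg ‖star hv ⬝ᵥ hu‖]) hαuv

/-- Among the two SIC decoding orders, it is weakly better to cancel the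
higher-weight user first. -/
theorem sic_order_comparison (n : ℕ) (hu hv : Fin n → ℂ) (αu αv : ℝ)
    (hαv : 0 ≤ αv) (hαuv : αv ≤ αu) :
    αv * Real.log (1 + (star hv ⬝ᵥ hv).re) +
      αu * Real.log (1 + (star hu ⬝ᵥ
        (((1 : Matrix (Fin n) (Fin n) ℂ) + Matrix.vecMulVec hv (star hv))⁻¹ *ᵥ hu)).re)
    ≤ αu * Real.log (1 + (star hu ⬝ᵥ hu).re) +
      αv * Real.log (1 + (star hv ⬝ᵥ
        (((1 : Matrix (Fin n) (Fin n) ℂ) + Matrix.vecMulVec hu (star hu))⁻¹ *ᵥ hv)).re) :=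
  sic_order_comparison_general n hu hv αu αv hαuv
end
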